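/- Let P ⊆ ℝ^d be a full-dimensional lattice polytope with codegree a satisfying P = ⌊aP⌋ + {P}. Then for every integer k ≥ 1, one has kP = ⌊(k+a−1)P⌋ + {P}. -/

import Mathlib

open Set Pointwise

/-- The set of lattice points of `ℝ^d`. -/
def latticePoints (d : ℕ) : Set (Fin d → ℝ) :=
  {x | ∀ i, ∃ z : ℤ, x i = (z : ℝ)}

/-- A lattice polytope: the convex hull of a finite set of lattice points. -/
def IsLatticePolytope {d : ℕ} (P : Set (Fin d → ℝ)) : Prop :=
  ∃ V : Finset (Fin d → ℝ), (V : Set (Fin d → ℝ)) ⊆ latticePoints d ∧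
    P = convexHull ℝ (V : Set (Fin d → ℝ))

/-- The natural pairing of an integral linear functional with a point of `ℝ^d`. -/
def pairing {d : ℕ} (n : Fin d → ℤ) (x : Fin d → ℝ) : ℝ :=
  ∑ i, (n i : ℝ) * x i

/-- `P = {x | n_F(x) ≥ -h_F}` is an irredundant presentation with primitive
integral inner normals, i.e. the facet presentation of `P`. -/
def IsFacetPresentation {d m : ℕ} (P : Set (Fin d → ℝ))
    (n : Fin m → Fin d → ℤ) (h : Fin m → ℤ) : Prop :=
  P = {x | ∀ i, pairing (n i) x ≥ -(h i : ℝ)} ∧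
  (∀ i, Finset.univ.gcd (n i) = 1) ∧
  (∀ i, ∃ x : Fin d → ℝ, pairing (n i) x < -(h i : ℝ) ∧
    ∀ j, j ≠ i → pairing (n j) x ≥ -(h j : ℝ))

/-- `a` is the codegree of `P`: the least `k ≥ 1` such that `int(kP)` contains
a lattice point. -/
def IsCodegree {d : ℕ} (P : Set (Fin d → ℝ)) (a : ℕ) : Prop :=
  1 ≤ a ∧ (interior ((a : ℝ) • P) ∩ latticePoints d).Nonempty ∧
    ∀ k : ℕ, 1 ≤ k → (interior ((k : ℝ) • P) ∩ latticePoints d).Nonempty → a ≤ k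

/-- The floor polytope `⌊R⌋ = conv(int(R) ∩ ℤ^d)`. -/
def floorPoly {d : ℕ} (R : Set (Fin d → ℝ)) : Set (Fin d → ℝ) :=
  convexHull ℝ (interior R ∩ latticePoints d)

/-- The remainder polytope `{P} = conv{x ∈ ℤ^d | n_F(x) ≥ (a-1)h_F - 1}`,
defined in terms of the facet presentation data and the codegree `a`. -/
def remPoly {d m : ℕ} (n : Fin m → Fin d → ℤ) (h : Fin m → ℤ) (a : ℕ) :
    Set (Fin d → ℝ) :=
  convexHull ℝ {x | x ∈ latticePoints d ∧
    ∀ i, pairing (n i) x ≥ ((a : ℝ) - 1) * (h i : ℝ) - 1}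

/-- The cone `C_P ⊆ ℝ^d × ℝ` over `P`, in terms of the facet presentation. -/
def coneOver {d m : ℕ} (n : Fin m → Fin d → ℤ) (h : Fin m → ℤ) :
    Set ((Fin d → ℝ) × ℝ) :=
  {p | ∀ i, pairing (n i) p.1 ≥ -(p.2 * (h i : ℝ))}

/-- The interior `int(C_P)` of the cone over `P`. -/
def intCone {d m : ℕ} (n : Fin m → Fin d → ℤ) (h : Fin m → ℤ) :
    Set ((Fin d → ℝ) × ℝ) :=
  {p | ∀ i, pairing (n i) p.1 > -(p.2 * (h i : ℝ))}

/-- The anticanonical set `ant(C_P)` of the cone over `P`. -/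
def antCone {d m : ℕ} (n : Fin m → Fin d → ℤ) (h : Fin m → ℤ) :
    Set ((Fin d → ℝ) × ℝ) :=
  {p | ∀ i, pairing (n i) p.1 ≥ -(p.2 * (h i : ℝ)) - 1}

/-- Lattice points of `ℝ^d × ℝ = ℝ^{d+1}`. -/
def latticePairs (d : ℕ) : Set ((Fin d → ℝ) × ℝ) :=
  {p | p.1 ∈ latticePoints d ∧ ∃ z : ℤ, p.2 = (z : ℝ)}

/-- The nearly Gorenstein condition with respect to a given facet presentation:
`(C_P ∩ ℤ^{d+1}) \ {0} ⊆ (int(C_P) ∩ ℤ^{d+1}) + (ant(C_P) ∩ ℤ^{d+1})`. -/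
def NGIncl {d m : ℕ} (n : Fin m → Fin d → ℤ) (h : Fin m → ℤ) : Prop :=
  (coneOver n h ∩ latticePairs d) \ {(0 : (Fin d → ℝ) × ℝ)} ⊆
    (intCone n h ∩ latticePairs d) + (antCone n h ∩ latticePairs d)

/-- A full-dimensional lattice polytope is nearly Gorenstein if the nearly
Gorenstein inclusion holds for its facet presentation. -/
def NearlyGorenstein {d : ℕ} (P : Set (Fin d → ℝ)) : Prop :=
  ∃ (m : ℕ) (n : Fin m → Fin d → ℤ) (h : Fin m → ℤ),
    IsFacetPresentation P n h ∧ NGIncl n h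

/-- The polar dual `Q* = {y | y(x) ≥ -1 for all x ∈ Q}`. -/
def polarDual {d : ℕ} (Q : Set (Fin d → ℝ)) : Set (Fin d → ℝ) :=
  {y | ∀ x ∈ Q, (∑ i, y i * x i) ≥ -1}

/-- A reflexive polytope: a lattice polytope with `0` in its interior whose
polar dual is again a lattice polytope. -/
def IsReflexive {d : ℕ} (Q : Set (Fin d → ℝ)) : Prop :=
  IsLatticePolytope Q ∧ (0 : Fin d → ℝ) ∈ interior Q ∧
    IsLatticePolytope (polarDual Q)

/-- A Gorenstein polytope: some dilate `kP`, translated by a lattice vector,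
is reflexive. -/
def IsGorenstein {d : ℕ} (P : Set (Fin d → ℝ)) : Prop :=
  ∃ (k : ℕ) (w : Fin d → ℝ), 1 ≤ k ∧ w ∈ latticePoints d ∧
    IsReflexive ((fun x => x - w) '' ((k : ℝ) • P))

/-- The integer decomposition property. -/
def IsIDP {d : ℕ} (P : Set (Fin d → ℝ)) : Prop :=
  ∀ k : ℕ, 1 ≤ k → ∀ x ∈ ((k : ℝ) • P) ∩ latticePoints d,
    ∃ y : Fin k → Fin d → ℝ, (∀ j, y j ∈ P ∩ latticePoints d) ∧ x = ∑ j, y j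

/-- Minkowski indecomposability of a lattice polytope. -/
def IsIndecomposable {d : ℕ} (P : Set (Fin d → ℝ)) : Prop :=
  (¬ ∃ p : Fin d → ℝ, P = {p}) ∧
  ∀ P₁ P₂ : Set (Fin d → ℝ), IsLatticePolytope P₁ → IsLatticePolytope P₂ →
    P = P₁ + P₂ → (∃ p, P₁ = {p}) ∨ (∃ p, P₂ = {p})

/-- A `(0,1)`-polytope: the convex hull of a set of `(0,1)`-vectors. -/
def Is01Polytope {d : ℕ} (P : Set (Fin d → ℝ)) : Prop :=
  ∃ V : Finset (Fin d → ℝ), (∀ v ∈ V, ∀ i, v i = 0 ∨ v i = 1) ∧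
    P = convexHull ℝ (V : Set (Fin d → ℝ))

/- If `P = ⌊aP⌋ + {P}`, then `kP = (k-1)P + P = (k-1)P + ⌊aP⌋ + {P}`, and adding the lattice
polytope `(k-1)P` to the interior lattice points of `aP` gives interior lattice points of
`(k+a-1)P`, whence `kP ⊆ ⌊(k+a-1)P⌋ + {P}`. Conversely, an interior lattice point `x` of
`(k+a-1)P` satisfies `n_F(x) ≥ -(k+a-1)h_F + 1` because `n_F(x)` is an integer, and adding a
lattice point `y` of `{P}`, with `n_F(y) ≥ (a-1)h_F - 1`, gives `n_F(x+y) ≥ -k h_F`. -/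

section LatticePolytope

variable {d : ℕ}

lemma latticePoints_add {x y : Fin d → ℝ} (hx : x ∈ latticePoints d)
    (hy : y ∈ latticePoints d) : x + y ∈ latticePoints d := fun i => by
  obtain ⟨z, hz⟩ := hx i
  obtain ⟨w, hw⟩ := hy i
  exact ⟨z + w, by simp [hz, hw]⟩

lemma natCast_smul_mem_latticePoints {x : Fin d → ℝ} (hx : x ∈ latticePoints d) (j : ℕ) :
    (j : ℝ) • x ∈ latticePoints d := fun i => by
  obtain ⟨z, hz⟩ := hx i
  exact ⟨j * z, by simp [hz]⟩

lemma IsLatticePolytope.natCast_smul {P : Set (Fin d → ℝ)} (hP : IsLatticePolytope P) (j : ℕ) :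
    IsLatticePolytope ((j : ℝ) • P) := by
  obtain ⟨V, hV, rfl⟩ := hP
  refine ⟨V.image ((j : ℝ) • ·), ?_, ?_⟩
  · simp only [Finset.coe_image, Set.image_subset_iff]
    exact fun v hv => natCast_smul_mem_latticePoints (hV hv) j
  · rw [Finset.coe_image, Set.image_smul, convexHull_smul]

lemma IsLatticePolytope.add_floorPoly_subset {Q : Set (Fin d → ℝ)} (hQ : IsLatticePolytope Q)
    (R : Set (Fin d → ℝ)) : Q + floorPoly R ⊆ floorPoly (Q + R) := by
  obtain ⟨V, hV, rfl⟩ := hQ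
  unfold floorPoly
  rw [← convexHull_add]
  refine convexHull_mono ?_
  rintro _ ⟨v, hv, x, ⟨hxR, hxL⟩, rfl⟩
  exact ⟨subset_interior_add_right (add_mem_add (subset_convexHull ℝ _ hv) hxR),
    latticePoints_add (hV hv) hxL⟩

end LatticePolytope

lemma interior_setOf_forall_le_subset {ι E : Type*} [NormedAddCommGroup E] [NormedSpace ℝ E]
    [CompleteSpace E] {f : ι → E →L[ℝ] ℝ} (hf : ∀ i, f i ≠ 0) (b : ι → ℝ) :
    interior {x | ∀ i, b i ≤ f i x} ⊆ {x | ∀ i, b i < f i x} := fun x hx i => by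
  have hsurj : Function.Surjective (f i) := LinearMap.surjective (f := (f i).toLinearMap)
    fun h0 => hf i (ContinuousLinearMap.coe_inj.mp h0)
  have hx' : x ∈ interior (f i ⁻¹' Ici (b i)) :=
    interior_mono (fun y (hy : ∀ i, b i ≤ f i y) => hy i) hx
  rwa [(f i).interior_preimage hsurj, interior_Ici] at hx'

section Pairing

variable {d m : ℕ}

lemma pairing_add (n : Fin d → ℤ) (x y : Fin d → ℝ) :
    pairing n (x + y) = pairing n x + pairing n y := by
  simp only [pairing, Pi.add_apply, mul_add, Finset.sum_add_distrib]

lemma pairing_smul (n : Fin d → ℤ) (c : ℝ) (x : Fin d → ℝ) :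
    pairing n (c • x) = c * pairing n x := by
  simp only [pairing, Pi.smul_apply, smul_eq_mul, Finset.mul_sum, mul_left_comm]

def pairingCLM (n : Fin d → ℤ) : (Fin d → ℝ) →L[ℝ] ℝ where
  toFun := pairing n
  map_add' := pairing_add n
  map_smul' := pairing_smul n
  cont := continuous_finsetSum _ fun i _ => continuous_const.mul (continuous_apply i)

@[simp]
lemma pairingCLM_apply (n : Fin d → ℤ) (x : Fin d → ℝ) : pairingCLM n x = pairing n x := rfl

lemma pairingCLM_ne_zero {n : Fin d → ℤ} (hn : n ≠ 0) : pairingCLM n ≠ 0 := by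
  obtain ⟨j, hj⟩ := Function.ne_iff.mp hn
  refine fun h0 => hj ?_
  simpa [pairing, Pi.single_apply] using DFunLike.congr_fun h0 (Pi.single j 1)

lemma pairing_eq_intCast (n : Fin d → ℤ) {x : Fin d → ℝ} (hx : x ∈ latticePoints d) :
    ∃ z : ℤ, pairing n x = z := by
  choose z hz using hx
  exact ⟨∑ i, n i * z i, by simp [pairing, hz]⟩

lemma convex_setOf_pairing_ge (n : Fin m → Fin d → ℤ) (b : Fin m → ℝ) :
    Convex ℝ {x | ∀ i, pairing (n i) x ≥ b i} := by
  have hset : {x | ∀ i, pairing (n i) x ≥ b i} = ⋂ i, pairingCLM (n i) ⁻¹' Ici (b i) := by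
    ext x; simp
  rw [hset]
  exact convex_iInter fun i => (convex_Ici (b i)).linear_preimage (pairingCLM (n i)).toLinearMap

lemma smul_setOf_pairing_ge (n : Fin m → Fin d → ℤ) (b : Fin m → ℝ) {c : ℝ} (hc : 0 < c) :
    c • {x | ∀ i, pairing (n i) x ≥ b i} = {x | ∀ i, pairing (n i) x ≥ c * b i} := by
  ext x
  simp only [mem_smul_set_iff_inv_smul_mem₀ hc.ne', Set.mem_ofPred_eq, pairing_smul, ge_iff_le,
    le_inv_mul_iff₀ hc]

lemma interior_setOf_pairing_ge_subset {n : Fin m → Fin d → ℤ} (hn : ∀ i, n i ≠ 0)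
    (b : Fin m → ℝ) :
    interior {x | ∀ i, pairing (n i) x ≥ b i} ⊆ {x | ∀ i, pairing (n i) x > b i} :=
  interior_setOf_forall_le_subset (f := fun i => pairingCLM (n i))
    (fun i => pairingCLM_ne_zero (hn i)) b

end Pairing

lemma floorPoly_add_remPoly_subset {d m : ℕ} {P : Set (Fin d → ℝ)} {n : Fin m → Fin d → ℤ}
    {h : Fin m → ℤ} (hH : P = {x | ∀ i, pairing (n i) x ≥ -(h i : ℝ)}) (hn : ∀ i, n i ≠ 0)
    {k a : ℕ} (hk : 1 ≤ k) (ha : 1 ≤ a) :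
    floorPoly (((k + a - 1 : ℕ) : ℝ) • P) + remPoly n h a ⊆ (k : ℝ) • P := by
  set N := k + a - 1 with hN
  have hNk : (N : ℝ) = k + a - 1 := by rw [hN, Nat.cast_sub (by omega)]; push_cast; ring
  have hNpos : (0 : ℝ) < N := Nat.cast_pos.mpr (by omega)
  unfold floorPoly remPoly
  rw [← convexHull_add, hH, smul_setOf_pairing_ge _ _ hNpos,
    smul_setOf_pairing_ge _ _ (by positivity)]
  refine convexHull_min ?_ (convex_setOf_pairing_ge _ _)
  rintro _ ⟨x, ⟨hxint, hxL⟩, y, ⟨-, hy⟩, rfl⟩ i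
  have hx := interior_setOf_pairing_ge_subset hn _ hxint i
  have hx_succ : (N : ℝ) * -(h i) + 1 ≤ pairing (n i) x := by
    obtain ⟨z, hz⟩ := pairing_eq_intCast (n i) hxL
    rw [hz] at hx ⊢
    exact_mod_cast Int.add_one_le_of_lt (by exact_mod_cast hx : (N : ℤ) * -h i < z)
  rw [hNk] at hx_succ
  show pairing (n i) (x + y) ≥ _
  linarith [pairing_add (n i) x y, hy i]

theorem stmt_5_general {d : ℕ} (P : Set (Fin d → ℝ))
    (hP : IsLatticePolytope P)
    {m : ℕ} (n : Fin m → Fin d → ℤ) (h : Fin m → ℤ)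
    (hpres : IsFacetPresentation P n h)
    (a : ℕ) (ha : IsCodegree P a)
    (hdecomp : P = floorPoly ((a : ℝ) • P) + remPoly n h a) :
    ∀ k : ℕ, 1 ≤ k →
      (k : ℝ) • P = floorPoly (((k + a - 1 : ℕ) : ℝ) • P) + remPoly n h a := by
  intro k hk
  obtain ⟨hH, hgcd, -⟩ := hpres
  have hn : ∀ i, n i ≠ 0 := fun i hi =>
    zero_ne_one ((Finset.gcd_eq_zero_iff.mpr fun j _ => congrFun hi j).symm.trans (hgcd i))
  refine subset_antisymm ?_ (floorPoly_add_remPoly_subset hH hn hk ha.1)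
  obtain ⟨j, rfl⟩ := Nat.exists_eq_add_of_le' hk
  have hconv : Convex ℝ P := hH ▸ convex_setOf_pairing_ge n _
  calc ((j + 1 : ℕ) : ℝ) • P = (j : ℝ) • P + P := by
        rw [Nat.cast_succ, hconv.add_smul j.cast_nonneg zero_le_one, one_smul]
    _ = (j : ℝ) • P + floorPoly ((a : ℝ) • P) + remPoly n h a := by rw [add_assoc, ← hdecomp]
    _ ⊆ floorPoly ((j : ℝ) • P + (a : ℝ) • P) + remPoly n h a :=
        add_subset_add_right ((hP.natCast_smul j).add_floorPoly_subset _)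
    _ = floorPoly (((j + 1 + a - 1 : ℕ) : ℝ) • P) + remPoly n h a := by
        rw [← hconv.add_smul j.cast_nonneg a.cast_nonneg, show j + 1 + a - 1 = j + a by omega,
          Nat.cast_add]

theorem stmt_5 {d : ℕ} (hd : 1 ≤ d) (P : Set (Fin d → ℝ))
    (hP : IsLatticePolytope P) (hfull : (interior P).Nonempty)
    {m : ℕ} (n : Fin m → Fin d → ℤ) (h : Fin m → ℤ)
    (hpres : IsFacetPresentation P n h)
    (a : ℕ) (ha : IsCodegree P a)
    (hdecomp : P = floorPoly ((a : ℝ) • P) + remPoly n h a) :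
    ∀ k : ℕ, 1 ≤ k →
      (k : ℝ) • P = floorPoly (((k + a - 1 : ℕ) : ℝ) • P) + remPoly n h a :=
  stmt_5_general P hP n h hpres a ha hdecomp
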